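/- Assume G is nontrivial. Let x ∈ {0,1}^G and suppose β : closure(O_G(x)) → H is a continuous surjective G-equivariant map with β⁻¹({1_H}) = {x}. Define W = {ξ ∈ H : there exists y ∈ closure(O_G(x)) with β(y) = ξ and y(1_G) = 1}. Then W is a proper, irredundant and generic window and x = x_W. -/

import Mathlib

open Topology Set

/-- The shift action of `G` on `A^G`: `(g · x)(h) = x(h·g)`. -/
def shift {G A : Type*} [Mul G] (g : G) (x : G → A) : G → A := fun h => x (h * g)

/-- The orbit `{g · x : g ∈ G}` of `x` under the shift action. -/
def shiftOrbit {G A : Type*} [Mul G] (x : G → A) : Set (G → A) :=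
  Set.range fun g => shift g x

open Classical in
/-- The model set `x_W ∈ {0,1}^G` associated to a window `W ⊆ H`:
`x_W(g) = 1 ⟺ τ(g) ∈ W`. -/
noncomputable def modelSet {G H : Type*} (τ : G → H) (W : Set H) : G → Bool :=
  fun g => if τ g ∈ W then true else false

lemma shift_shift {G A : Type*} [Semigroup G] (g h : G) (y : G → A) :
    shift g (shift h y) = shift (g * h) y := by
  funext k; simp [shift, mul_assoc]

lemma shift_one {G A : Type*} [Monoid G] (y : G → A) : shift (1 : G) y = y := by
  funext k; simp [shift]

lemma continuous_shift {G A : Type*} [Mul G] [TopologicalSpace A] (g : G) :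
    Continuous (shift g : (G → A) → (G → A)) :=
  continuous_pi fun h => continuous_apply (h * g)

lemma shift_mem_closure_orbit {G A : Type*} [Group G] [TopologicalSpace A]
    (g : G) {x y : G → A} (hy : y ∈ closure (shiftOrbit x)) :
    shift g y ∈ closure (shiftOrbit x) := by
  have h1 : shift g y ∈ shift g '' closure (shiftOrbit x) := ⟨y, hy, rfl⟩
  have h2 : shift g '' closure (shiftOrbit x) ⊆ closure (shift g '' shiftOrbit x) :=
    image_closure_subset_closure_image (continuous_shift g)
  refine closure_mono ?_ (h2 h1)
  rintro _ ⟨_, ⟨h, rfl⟩, rfl⟩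
  exact ⟨g * h, (shift_shift g h x).symm⟩

/-- If `G` is nontrivial, `x ∈ {0,1}^G` and `β` is a continuous
surjective `G`-equivariant map on the orbit closure of `x` with
`β⁻¹({1}) = {x}`, then `W = {ξ : ∃ y ∈ closure(O_G(x)), β(y) = ξ and y(1) = 1}`
is a proper, irredundant and generic window and `x = x_W`. -/
theorem statement4
    {G : Type*} [Group G] [Countable G] [Nontrivial G]
    {H : Type*} [Group H] [TopologicalSpace H] [IsTopologicalGroup H]
    [CompactSpace H] [TopologicalSpace.MetrizableSpace H]
    (τ : G →* H) (hτ_inj : Function.Injective τ) (hτ_dense : DenseRange τ)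
    (x : G → Bool)
    (β : (G → Bool) → H)
    (hβ_cont : ContinuousOn β (closure (shiftOrbit x)))
    (hβ_equiv : ∀ g : G, ∀ y ∈ closure (shiftOrbit x), β (shift g y) = τ g * β y)
    (hβ_surj : ∀ ξ : H, ∃ y ∈ closure (shiftOrbit x), β y = ξ)
    (hβ_fiber : {y ∈ closure (shiftOrbit x) | β y = 1} = {x})
    (W : Set H)
    (hW : W = {ξ : H | ∃ y ∈ closure (shiftOrbit x), β y = ξ ∧ y 1 = true}) :
    W = closure (interior W) ∧
    (∀ ξ : H, (fun w => w * ξ) '' W = W → ξ = 1) ∧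
    frontier W ∩ Set.range τ = ∅ ∧
    x = modelSet (⇑τ) W := by
  set X := closure (shiftOrbit x) with hXdef
  have hxX : x ∈ X := subset_closure ⟨1, shift_one x⟩
  have hβx : β x = 1 := by
    have hx : x ∈ ({y ∈ X | β y = 1} : Set (G → Bool)) := by
      rw [hβ_fiber]; rfl
    exact hx.2
  have hβshift : ∀ g : G, β (shift g x) = τ g := by
    intro g; rw [hβ_equiv g x hxX, hβx, mul_one]
  -- fibers over τ g are singletons
  have hfiber : ∀ (g : G) y, y ∈ X → β y = τ g → y = shift g x := by
    intro g y hy hβy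
    have hz : shift g⁻¹ y ∈ X := shift_mem_closure_orbit g⁻¹ hy
    have hβz : β (shift g⁻¹ y) = 1 := by
      rw [hβ_equiv g⁻¹ y hy, hβy, map_inv, inv_mul_cancel]
    have : shift g⁻¹ y ∈ ({y ∈ X | β y = 1} : Set (G → Bool)) := ⟨hz, hβz⟩
    rw [hβ_fiber] at this
    have hyx : shift g⁻¹ y = x := this
    calc y = shift g (shift g⁻¹ y) := by rw [shift_shift, mul_inv_cancel, shift_one]
    _ = shift g x := by rw [hyx]
  -- key: τ g ∈ W ↔ x g = true
  have hkey : ∀ g : G, τ g ∈ W ↔ x g = true := by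
    intro g
    rw [hW]
    constructor
    · rintro ⟨y, hyX, hβy, hy1⟩
      have := hfiber g y hyX hβy
      rw [this] at hy1
      simpa [shift] using hy1
    · intro hxg
      exact ⟨shift g x, shift_mem_closure_orbit g hxX, hβshift g, by simpa [shift] using hxg⟩
  -- closure lemma
  have hclos : ∀ (b : Bool), ∀ y ∈ X, y 1 = b → β y ∈ closure (τ '' {g | x g = b}) := by
    intro b y hy hyb
    have hU : IsOpen {z : G → Bool | z 1 = b} :=
      by
      have : {z : G → Bool | z 1 = b} = (fun z : G → Bool => z 1) ⁻¹' {b} := rfl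
      rw [this]
      exact (continuous_apply (1 : G)).isOpen_preimage _ (isOpen_discrete _)
    have h1 : y ∈ closure ({z : G → Bool | z 1 = b} ∩ shiftOrbit x) :=
      hU.inter_closure ⟨hyb, hy⟩
    have hc : ContinuousOn β (closure ({z : G → Bool | z 1 = b} ∩ shiftOrbit x)) :=
      hβ_cont.mono (closure_mono inter_subset_right)
    have h2 : β y ∈ closure (β '' ({z : G → Bool | z 1 = b} ∩ shiftOrbit x)) :=
      hc.image_closure ⟨y, h1, rfl⟩
    refine closure_mono ?_ h2
    rintro _ ⟨z, ⟨hz1, ⟨g, rfl⟩⟩, rfl⟩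
    refine ⟨g, ?_, (hβshift g).symm⟩
    simpa [shift] using hz1
  -- W is closed
  have hXcl : IsClosed X := isClosed_closure
  have hCcomp : ∀ b : Bool, IsCompact (X ∩ {z : G → Bool | z 1 = b}) := by
    intro b
    exact hXcl.isCompact.inter_right
      (by
        have : {z : G → Bool | z 1 = b} = (fun z : G → Bool => z 1) ⁻¹' {b} := rfl
        rw [this]
        exact IsClosed.preimage (continuous_apply (1:G)) (isClosed_discrete _))
  have hWimg : W = β '' (X ∩ {z : G → Bool | z 1 = true}) := by
    rw [hW]; ext ξ
    constructor
    · rintro ⟨y, hyX, hβy, hy1⟩; exact ⟨y, ⟨hyX, hy1⟩, hβy⟩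
    · rintro ⟨y, ⟨hyX, hy1⟩, hβy⟩; exact ⟨y, hyX, hβy, hy1⟩
  have hWclosed : IsClosed W := by
    rw [hWimg]
    exact ((hCcomp true).image_of_continuousOn (hβ_cont.mono inter_subset_left)).isClosed
  -- F: closed set of β-images of points with y 1 = false
  set F : Set H := β '' (X ∩ {z : G → Bool | z 1 = false}) with hFdef
  have hFclosed : IsClosed F :=
    ((hCcomp false).image_of_continuousOn (hβ_cont.mono inter_subset_left)).isClosed
  have hFcompl : Fᶜ ⊆ W := by
    intro ξ hξ
    obtain ⟨y, hyX, hβy⟩ := hβ_surj ξ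
    cases hy1 : y 1 with
    | false => exact absurd ⟨y, ⟨hyX, hy1⟩, hβy⟩ hξ
    | true => rw [hW]; exact ⟨y, hyX, hβy, hy1⟩
  -- x g = true → τ g ∈ interior W
  have hint : ∀ g : G, x g = true → τ g ∈ interior W := by
    intro g hxg
    have hτgF : τ g ∉ F := by
      rintro ⟨y, ⟨hyX, hy1⟩, hβy⟩
      have := hfiber g y hyX hβy
      rw [this] at hy1
      simp [shift, hxg] at hy1
    exact interior_maximal hFcompl hFclosed.isOpen_compl hτgF
  -- β y ∈ interior W → y 1 = true
  have hintkey : ∀ y ∈ X, β y ∈ interior W → y 1 = true := by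
    intro y hyX hβy
    cases hy1 : y 1 with
    | true => rfl
    | false =>
      exfalso
      have h1 : β y ∈ closure (τ '' {g | x g = false}) := hclos false y hyX hy1
      have h2 : (τ '' {g | x g = false}) ⊆ Wᶜ := by
        rintro _ ⟨g, hg, rfl⟩ hτg
        rw [hkey g] at hτg
        simp only [mem_setOf_eq] at hg
        rw [hg] at hτg; exact Bool.false_ne_true hτg
      have h3 : β y ∈ closure Wᶜ := closure_mono h2 h1
      rw [closure_compl] at h3
      exact h3 hβy
  refine ⟨?_, ?_, ?_, ?_⟩
  · -- properness
    apply Subset.antisymm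
    · intro ξ hξ
      rw [hW] at hξ
      obtain ⟨y, hyX, hβy, hy1⟩ := hξ
      have h1 : β y ∈ closure (τ '' {g | x g = true}) := hclos true y hyX hy1
      have h2 : (τ '' {g | x g = true}) ⊆ interior W := by
        rintro _ ⟨g, hg, rfl⟩
        exact hint g hg
      rw [← hβy]
      exact closure_mono h2 h1
    · calc closure (interior W) ⊆ closure W := closure_mono interior_subset
      _ = W := hWclosed.closure_eq
  · -- irredundance
    intro ξ hξ
    have hiff : ∀ η : H, η ∈ W ↔ η * ξ ∈ W := by
      intro η
      constructor
      · intro h; rw [← hξ]; exact ⟨η, h, rfl⟩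
      · intro h
        rw [← hξ] at h
        obtain ⟨w, hw, hwe⟩ := h
        have : w = η := mul_right_cancel hwe
        rwa [← this]
    obtain ⟨y, hyX, hβy⟩ := hβ_surj ξ⁻¹
    have hyx : y = x := by
      funext g
      have hfwd : y g = true → x g = true := by
        intro hyg
        have hsX : shift g y ∈ X := shift_mem_closure_orbit g hyX
        have hβs : β (shift g y) = τ g * ξ⁻¹ := by rw [hβ_equiv g y hyX, hβy]
        have hmem : τ g * ξ⁻¹ ∈ W := by
          rw [hW]
          exact ⟨shift g y, hsX, hβs, by simpa [shift] using hyg⟩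
        have : τ g * ξ⁻¹ * ξ ∈ W := (hiff _).mp hmem
        rw [inv_mul_cancel_right] at this
        exact (hkey g).mp this
      have hbwd : x g = true → y g = true := by
        intro hxg
        have h1 : τ g ∈ interior W := hint g hxg
        -- translate interior by ξ⁻¹
        have e : H ≃ₜ H := Homeomorph.mulRight ξ
        have hWe : (Homeomorph.mulRight ξ) '' W = W := hξ
        have h2 : (Homeomorph.mulRight ξ) '' interior W = interior W := by
          rw [(Homeomorph.mulRight ξ).image_interior, hWe]
        have h3 : τ g * ξ⁻¹ ∈ interior W := by
          rw [← h2] at h1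
          obtain ⟨a, ha, hae⟩ := h1
          have : a = τ g * ξ⁻¹ := by
            rw [eq_mul_inv_iff_mul_eq]; exact hae
          rwa [← this]
        have hsX : shift g y ∈ X := shift_mem_closure_orbit g hyX
        have hβs : β (shift g y) = τ g * ξ⁻¹ := by rw [hβ_equiv g y hyX, hβy]
        have := hintkey (shift g y) hsX (by rw [hβs]; exact h3)
        simpa [shift] using this
      cases hxg : x g with
      | true => exact hbwd hxg
      | false =>
        cases hyg : y g with
        | false => rfl
        | true => rw [hfwd hyg] at hxg; exact absurd hxg (by simp)
    have : ξ⁻¹ = 1 := by rw [← hβy, hyx, hβx]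
    exact inv_eq_one.mp this
  · -- genericity
    rw [eq_empty_iff_forall_notMem]
    rintro η ⟨hfr, g, rfl⟩
    rw [hWclosed.frontier_eq] at hfr
    exact hfr.2 (hint g ((hkey g).mp hfr.1))
  · -- model set
    funext g
    simp only [modelSet]
    cases hxg : x g with
    | true => rw [if_pos ((hkey g).mpr hxg)]
    | false =>
      rw [if_neg]
      intro h
      rw [(hkey g).mp h] at hxg
      exact absurd hxg (by simp)
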